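/- Let A, B be strings of lengths m and n, σ a character, and define Diff[i,j] = LCS(B[i..n], σ·A[0..j]) − P[i,j] for (i,j) ∈ [0:n]×[0:m]. Assume every entry of the density matrix P□ is nonpositive. Then for all 0 ≤ i ≤ n and 0 ≤ j ≤ m: Diff[i,j] = 1 if and only if k = nextmatch(i,σ,B) < ∞ and P□[i',j'] = 0 for all i' with i+1 ≤ i' ≤ k and all j' with 1 ≤ j' ≤ j (i.e., there are no pivotal points in the submatrix of P□ with rows i+1,…,k and columns 1,…,j). -/

import Mathlib

/-!
Write `X = B[i..n]`, `Y = A[0..j]`. If `σ` does not occur in `X`, prepending `σ` to `Y` cannot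
lengthen a common subsequence, so `Diff[i,j] = 0` and `nextmatch i σ B = ∞`. Otherwise split
`X = X₁ ++ σ :: B[k..n]` at the first occurrence, `k = nextmatch i σ B`. A common subsequence of
`X` and `σ · Y` either avoids the new `σ` or can be matched with its `σ` at position `k`, so
`LCS(X, σ · Y) = max (P[i,j], 1 + P[k,j])` with `P[k,j] ≤ P[i,j]`; hence `Diff[i,j] = 1` iff
`P[k,j] = P[i,j]`. Finally, the entries of `P□` on the block `(i,k] × (0,j]` sum to
`P[k,j] - P[i,j]` (the column `P[·,0]` vanishes), and since they are all nonpositive they vanish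
exactly when this sum does.
-/

variable {α : Type*}

/-- LCS of two lists: the maximum length of a common sublist. -/
noncomputable def LCS (X Y : List α) : ℕ :=
  sSup {k | ∃ Z : List α, Z.length = k ∧ Z.Sublist X ∧ Z.Sublist Y}

/-- `substr S i j` is S[i..j]: the characters of S at (1-based) positions i+1,…,j. -/
def substr (S : List α) (i j : ℕ) : List α := (S.take j).drop i

/-- The density matrix D□ of a matrix D. -/
def density (D : ℕ → ℕ → ℤ) (i j : ℕ) : ℤ :=
  D i j + D (i - 1) (j - 1) - D (i - 1) j - D i (j - 1)

/-- The all scores matrix K of A and B: K[i,j] = LCS(B[i..j], A) if i ≤ j, else j - i. -/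
noncomputable def Kmat (A B : List α) (i j : ℕ) : ℤ :=
  if i ≤ j then (LCS (substr B i j) A : ℤ) else (j : ℤ) - (i : ℤ)

/-- The all scores matrix P of A and B: P[i,j] = LCS(B[i..n], A[0..j]). -/
noncomputable def Pmat (A B : List α) (i j : ℕ) : ℤ :=
  (LCS (substr B i B.length) (substr A 0 j) : ℤ)

/-- nextmatch(i,σ,B): minimum (1-based) position i' with i < i' ≤ |B| and B[i'] = σ; ⊤ (∞) if none. -/
noncomputable def nextmatch (i : ℕ) (σ : α) (B : List α) : ℕ∞ :=
  sInf {k : ℕ∞ | ∃ k' : ℕ, k = (k' : ℕ∞) ∧ i < k' ∧ k' ≤ B.length ∧ B[k' - 1]? = some σ}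

/-- prevmatch(j,σ,B): maximum (1-based) position i' with 1 ≤ i' ≤ j and B[i'] = σ; ⊥ (−∞) if none. -/
noncomputable def prevmatch (j : ℕ) (σ : α) (B : List α) : WithBot ℕ :=
  sSup {k : WithBot ℕ | ∃ k' : ℕ, k = (k' : WithBot ℕ) ∧ 1 ≤ k' ∧ k' ≤ j ∧ B[k' - 1]? = some σ}

open Finset

lemma bddAbove_LCS_set (X Y : List α) :
    BddAbove {k | ∃ Z : List α, Z.length = k ∧ Z.Sublist X ∧ Z.Sublist Y} :=
  ⟨X.length, fun _ ⟨_, hZ, hX, _⟩ => hZ ▸ hX.length_le⟩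

lemma length_le_LCS {Z X Y : List α} (hX : Z.Sublist X) (hY : Z.Sublist Y) :
    Z.length ≤ LCS X Y :=
  le_csSup (bddAbove_LCS_set X Y) ⟨Z, rfl, hX, hY⟩

lemma exists_sublist_length_eq_LCS (X Y : List α) :
    ∃ Z : List α, Z.length = LCS X Y ∧ Z.Sublist X ∧ Z.Sublist Y := by
  refine Nat.sSup_mem ?_ (bddAbove_LCS_set X Y)
  exact ⟨0, [], rfl, List.nil_sublist X, List.nil_sublist Y⟩

lemma LCS_mono_left {X X' : List α} (h : X.Sublist X') (Y : List α) :
    LCS X Y ≤ LCS X' Y := by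
  obtain ⟨Z, hZ, hX, hY⟩ := exists_sublist_length_eq_LCS X Y
  exact hZ ▸ length_le_LCS (hX.trans h) hY

lemma LCS_mono_right (X : List α) {Y Y' : List α} (h : Y.Sublist Y') :
    LCS X Y ≤ LCS X Y' := by
  obtain ⟨Z, hZ, hX, hY⟩ := exists_sublist_length_eq_LCS X Y
  exact hZ ▸ length_le_LCS hX (hY.trans h)

@[simp]
lemma LCS_nil_right (X : List α) : LCS X ([] : List α) = 0 := by
  obtain ⟨Z, hZ, -, hY⟩ := exists_sublist_length_eq_LCS X ([] : List α)
  rw [← hZ, List.sublist_nil.mp hY, List.length_nil]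

lemma LCS_cons_of_not_mem {X : List α} {σ : α} (h : σ ∉ X) (Y : List α) :
    LCS X (σ :: Y) = LCS X Y := by
  refine le_antisymm ?_ (LCS_mono_right X (List.sublist_cons_self σ Y))
  obtain ⟨Z, hZ, hX, hY⟩ := exists_sublist_length_eq_LCS X (σ :: Y)
  rcases List.sublist_cons_iff.mp hY with hY | ⟨Z', rfl, -⟩
  · exact hZ ▸ length_le_LCS hX hY
  · exact absurd (hX.mem List.mem_cons_self) h

lemma List.Sublist.of_cons_append_cons {Z X₁ X₂ : List α} {σ : α}
    (h : (σ :: Z).Sublist (X₁ ++ σ :: X₂)) (hσ : σ ∉ X₁) : Z.Sublist X₂ := by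
  induction X₁ with
  | nil => exact List.cons_sublist_cons.mp h
  | cons b X₁ ih =>
    cases h with
    | cons _ h => exact ih h (fun hm => hσ (List.mem_cons_of_mem b hm))
    | cons_cons => exact absurd List.mem_cons_self hσ

/-- A common subsequence that uses the prepended `σ` can always match it with the first `σ` of
`X₁ ++ σ :: X₂`. -/
lemma LCS_append_cons_cons {X₁ X₂ : List α} {σ : α} (hσ : σ ∉ X₁) (Y : List α) :
    LCS (X₁ ++ σ :: X₂) (σ :: Y) = max (LCS (X₁ ++ σ :: X₂) Y) (LCS X₂ Y + 1) := by
  apply le_antisymm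
  · obtain ⟨Z, hZ, hX, hY⟩ := exists_sublist_length_eq_LCS (X₁ ++ σ :: X₂) (σ :: Y)
    rcases List.sublist_cons_iff.mp hY with hY | ⟨Z', rfl, hY'⟩
    · exact le_max_of_le_left (hZ ▸ length_le_LCS hX hY)
    · exact le_max_of_le_right
        (hZ ▸ Nat.succ_le_succ (length_le_LCS (hX.of_cons_append_cons hσ) hY'))
  · refine max_le (LCS_mono_right _ (List.sublist_cons_self σ Y)) ?_
    obtain ⟨Z, hZ, hX, hY⟩ := exists_sublist_length_eq_LCS X₂ Y
    exact hZ ▸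
      length_le_LCS (List.sublist_append_of_sublist_right (hX.cons_cons σ)) (hY.cons_cons σ)

lemma LCS_append_cons_cons_eq_add_one_iff {X₁ X₂ : List α} {σ : α} (hσ : σ ∉ X₁) (Y : List α) :
    LCS (X₁ ++ σ :: X₂) (σ :: Y) = LCS (X₁ ++ σ :: X₂) Y + 1 ↔
      LCS X₂ Y = LCS (X₁ ++ σ :: X₂) Y := by
  have hle : LCS X₂ Y ≤ LCS (X₁ ++ σ :: X₂) Y :=
    LCS_mono_left (List.sublist_append_of_sublist_right (List.sublist_cons_self σ X₂)) Y
  rw [LCS_append_cons_cons hσ]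
  omega

lemma sum_density_row (D : ℕ → ℕ → ℤ) (i j : ℕ) :
    ∑ j' ∈ Ioc 0 j, density D i j' = D i j - D (i - 1) j - D i 0 + D (i - 1) 0 := by
  induction j with
  | zero => simp
  | succ j ih =>
    rw [sum_Ioc_succ_top (Nat.zero_le j), ih, density, Nat.add_sub_cancel]
    ring

lemma sum_density_block (D : ℕ → ℕ → ℤ) {i k : ℕ} (hik : i ≤ k) (j : ℕ) :
    ∑ p ∈ Ioc i k ×ˢ Ioc 0 j, density D p.1 p.2 = D k j - D i j - D k 0 + D i 0 := by
  rw [sum_product]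
  induction k, hik using Nat.le_induction with
  | base => simp
  | succ k hik ih =>
    rw [sum_Ioc_succ_top hik, ih, sum_density_row, Nat.add_sub_cancel]
    ring

lemma density_eq_zero_on_block_iff {D : ℕ → ℕ → ℤ} {i k j : ℕ} (hik : i ≤ k)
    (hD : ∀ i' j', i + 1 ≤ i' → i' ≤ k → 1 ≤ j' → j' ≤ j → density D i' j' ≤ 0) :
    (∀ i' j', i + 1 ≤ i' → i' ≤ k → 1 ≤ j' → j' ≤ j → density D i' j' = 0) ↔
      D k j - D i j - D k 0 + D i 0 = 0 := by
  have hmem : ∀ p : ℕ × ℕ, p ∈ Ioc i k ×ˢ Ioc 0 j ↔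
      i + 1 ≤ p.1 ∧ p.1 ≤ k ∧ 1 ≤ p.2 ∧ p.2 ≤ j := by
    intro p
    simp only [mem_product, mem_Ioc]
    omega
  rw [← sum_density_block D hik j, sum_eq_zero_iff_of_nonpos]
  · simp only [hmem, Prod.forall, and_imp]
  · simp only [hmem, Prod.forall, and_imp]
    exact hD

lemma Pmat_eq_LCS_drop_take (A B : List α) (i j : ℕ) :
    Pmat A B i j = (LCS (B.drop i) (A.take j) : ℤ) := by
  rw [Pmat, substr, substr, List.take_length, List.drop_zero]

@[simp]
lemma Pmat_zero_right (A B : List α) (i : ℕ) : Pmat A B i 0 = 0 := by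
  simp [Pmat_eq_LCS_drop_take]

lemma List.exists_eq_append_cons_not_mem {l : List α} {σ : α} (h : σ ∈ l) :
    ∃ s t, l = s ++ σ :: t ∧ σ ∉ s := by
  induction l with
  | nil => simp at h
  | cons b l ih =>
    by_cases hb : b = σ
    · exact ⟨[], l, by rw [hb, List.nil_append], List.not_mem_nil⟩
    · obtain ⟨s, t, rfl, hs⟩ := ih ((List.mem_cons.mp h).resolve_left (Ne.symm hb))
      exact ⟨b :: s, t, rfl, by simp [hs, Ne.symm hb]⟩

lemma nextmatch_eq_top {i : ℕ} {σ : α} {B : List α} (h : σ ∉ B.drop i) :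
    nextmatch i σ B = ⊤ := by
  refine sInf_eq_top.mpr ?_
  rintro _ ⟨k, rfl, hik, -, hk⟩
  refine absurd (List.mem_of_getElem? (l := B.drop i) (i := k - 1 - i) ?_) h
  rwa [List.getElem?_drop, show i + (k - 1 - i) = k - 1 by omega]

lemma nextmatch_eq_of_drop_eq {i : ℕ} {σ : α} {B s t : List α}
    (hsplit : B.drop i = s ++ σ :: t) (hs : σ ∉ s) :
    nextmatch i σ B = ((i + s.length + 1 : ℕ) : ℕ∞) := by
  have hget : ∀ p, B[i + p]? = (s ++ σ :: t)[p]? := fun p => by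
    rw [← hsplit, List.getElem?_drop]
  have hlen : i + s.length + 1 ≤ B.length := by
    have := congrArg List.length hsplit
    simp only [List.length_drop, List.length_append, List.length_cons] at this
    omega
  apply le_antisymm
  · refine sInf_le ⟨_, rfl, by omega, hlen, ?_⟩
    simpa [List.getElem?_append_right] using hget s.length
  · refine le_sInf ?_
    rintro _ ⟨k, rfl, hik, -, hk⟩
    rw [Nat.cast_le]
    by_contra! hlt
    have := hget (k - 1 - i)
    rw [show i + (k - 1 - i) = k - 1 by omega, hk, List.getElem?_append_left (by omega)] at this
    exact hs (List.mem_of_getElem? this.symm)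

lemma exists_nextmatch_eq {i : ℕ} {σ : α} {B : List α} (h : σ ∈ B.drop i) :
    ∃ (k : ℕ) (s : List α), nextmatch i σ B = k ∧ i ≤ k ∧ k ≤ B.length ∧
      B.drop i = s ++ σ :: B.drop k ∧ σ ∉ s := by
  obtain ⟨s, t, hsplit, hs⟩ := List.exists_eq_append_cons_not_mem h
  have hlen := congrArg List.length hsplit
  simp only [List.length_drop, List.length_append, List.length_cons] at hlen
  have ht : B.drop (i + s.length + 1) = t := by
    rw [add_assoc, ← List.drop_drop, hsplit]
    simp [List.drop_append]
  exact ⟨i + s.length + 1, s, nextmatch_eq_of_drop_eq hsplit hs, by omega, by omega,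
    ht ▸ hsplit, hs⟩

theorem stmt_13_general {α : Type*} (A B : List α) (m n : ℕ)
    (hB : B.length = n) (σ : α)
    (hNonpos : ∀ i, 1 ≤ i → i ≤ n → ∀ j, 1 ≤ j → j ≤ m →
      density (Pmat A B) i j ≤ 0) :
    ∀ i ≤ n, ∀ j ≤ m,
      ((LCS (substr B i n) (σ :: substr A 0 j) : ℤ) - Pmat A B i j = 1 ↔
        ∃ k : ℕ, nextmatch i σ B = (k : ℕ∞) ∧
          ∀ i' j', i + 1 ≤ i' → i' ≤ k → 1 ≤ j' → j' ≤ j →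
            density (Pmat A B) i' j' = 0) := by
  rintro i - j hj
  rw [show substr B i n = B.drop i by rw [substr, ← hB, List.take_length],
    show substr A 0 j = A.take j from rfl, Pmat_eq_LCS_drop_take]
  by_cases hσ : σ ∈ B.drop i
  · obtain ⟨k, s, hk, hik, hkn, hsplit, hs⟩ := exists_nextmatch_eq hσ
    have hblock := density_eq_zero_on_block_iff (D := Pmat A B) (j := j) hik
      fun i' j' h₁ h₂ h₃ h₄ => hNonpos i' (by omega) (by omega) j' h₃ (by omega)
    have hdiff := LCS_append_cons_cons_eq_add_one_iff (X₂ := B.drop k) hs (A.take j)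
    rw [← hsplit] at hdiff
    simp only [hk, Nat.cast_inj, exists_eq_left', hblock, Pmat_zero_right]
    rw [Pmat_eq_LCS_drop_take, Pmat_eq_LCS_drop_take]
    omega
  · simp [LCS_cons_of_not_mem hσ, nextmatch_eq_top hσ]

/-- Diff[i,j] = 1 iff k = nextmatch(i,σ,B) < ∞ and there are no
pivotal points in the submatrix of P□ with rows i+1,…,k and columns 1,…,j. -/
theorem stmt_13 {α : Type*} (A B : List α) (m n : ℕ)
    (hA : A.length = m) (hB : B.length = n) (σ : α)
    (hNonpos : ∀ i, 1 ≤ i → i ≤ n → ∀ j, 1 ≤ j → j ≤ m →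
      density (Pmat A B) i j ≤ 0) :
    ∀ i ≤ n, ∀ j ≤ m,
      ((LCS (substr B i n) (σ :: substr A 0 j) : ℤ) - Pmat A B i j = 1 ↔
        ∃ k : ℕ, nextmatch i σ B = (k : ℕ∞) ∧
          ∀ i' j', i + 1 ≤ i' → i' ≤ k → 1 ≤ j' → j' ≤ j →
            density (Pmat A B) i' j' = 0) :=
  stmt_13_general A B m n hB σ hNonpos
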